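/- Let u : X → Λ be quasi-Leontief with dual map u♯ defined on Λ₀ (u(X) ⊆ Λ₀ ⊆ ↓u(X)). Then u° = u♯ ∘ u, the efficient set E(u;X) equals {u♯(λ) : λ ∈ Λ₀}, and the map ū = u ∘ u♯ is a closure operator on Λ₀ (isotone, λ ≤ ū(λ), ū∘ū = ū). -/

import Mathlib

/-!
Since `u x ∈ Λ₀`, both `u° x` and `u♯ (u x)` are the least element of `{x' | u x ≤ u x'}`.
Leastness of `u♯ l` together with `l ≤ u (u♯ l)` gives `u♯ (u (u♯ l)) = u♯ l`, which yields the
idempotence of `ū` and shows that every `u♯ l` is efficient; conversely an efficient `x` equals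
`u♯ (u x)`. For isotony, if `ū b < ū a` with `a ≤ b`, leastness forces `u♯ a = u♯ b`, which is
absurd; this is where the linearity of `Λ` enters.
-/

namespace QuasiLeontief

variable {X Λ : Type*} [PartialOrder X]

def efficientSet [LE Λ] (u : X → Λ) : Set X := {x | ∀ x', u x ≤ u x' → x ≤ x'}

section Preorder

variable [Preorder Λ] {u : X → Λ} {us : Λ → X} {Λ0 : Set Λ}

theorem isLeast_dual_apply (h1 : Set.range u ⊆ Λ0)
    (hus : ∀ l ∈ Λ0, IsLeast {x | l ≤ u x} (us l)) (x : X) :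
    IsLeast {x' | u x ≤ u x'} (us (u x)) :=
  hus _ (h1 ⟨x, rfl⟩)

theorem dual_apply_dual (h1 : Set.range u ⊆ Λ0)
    (hus : ∀ l ∈ Λ0, IsLeast {x | l ≤ u x} (us l)) {l : Λ} (hl : l ∈ Λ0) :
    us (u (us l)) = us l :=
  le_antisymm ((isLeast_dual_apply h1 hus (us l)).2 le_rfl)
    ((hus l hl).2 ((hus l hl).1.trans (isLeast_dual_apply h1 hus (us l)).1))

theorem efficientSet_eq_image_dual (h1 : Set.range u ⊆ Λ0)
    (hus : ∀ l ∈ Λ0, IsLeast {x | l ≤ u x} (us l)) :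
    efficientSet u = us '' Λ0 := by
  ext x
  constructor
  · intro hx
    have hdual := isLeast_dual_apply h1 hus x
    exact ⟨u x, h1 ⟨x, rfl⟩, le_antisymm (hdual.2 le_rfl) (hx _ hdual.1)⟩
  · rintro ⟨l, hl, rfl⟩ x' hx'
    exact (hus l hl).2 ((hus l hl).1.trans hx')

end Preorder

theorem monotoneOn_comp_dual [LinearOrder Λ] {u : X → Λ} {us : Λ → X} {Λ0 : Set Λ}
    (h1 : Set.range u ⊆ Λ0) (hus : ∀ l ∈ Λ0, IsLeast {x | l ≤ u x} (us l)) :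
    MonotoneOn (fun l => u (us l)) Λ0 := by
  intro a ha b hb hab
  dsimp only
  refine not_lt.1 fun hlt => hlt.ne ?_
  have hab' : us a ≤ us b := (hus a ha).2 (hab.trans (hus b hb).1)
  have hba : us b ≤ us a := by
    simpa only [dual_apply_dual h1 hus hb] using (isLeast_dual_apply h1 hus (us b)).2 hlt.le
  rw [le_antisymm hba hab']

end QuasiLeontief

open QuasiLeontief in
theorem quasiLeontief_dual_recap_general
    {X Λ : Type*} [PartialOrder X] [LinearOrder Λ]
    (u : X → Λ) (u0 : X → X) (us : Λ → X) (Λ0 : Set Λ)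
    (h1 : Set.range u ⊆ Λ0)
    (hu0 : ∀ x : X, IsLeast {x' : X | u x ≤ u x'} (u0 x))
    (hus : ∀ l ∈ Λ0, IsLeast {x : X | l ≤ u x} (us l)) :
    (∀ x : X, u0 x = us (u x)) ∧
    {x : X | ∀ x' : X, u x ≤ u x' → x ≤ x'} = us '' Λ0 ∧
    MonotoneOn (fun l => u (us l)) Λ0 ∧
    (∀ l ∈ Λ0, l ≤ u (us l)) ∧
    (∀ l ∈ Λ0, u (us (u (us l))) = u (us l)) :=
  ⟨fun x => (hu0 x).unique (isLeast_dual_apply h1 hus x),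
    efficientSet_eq_image_dual h1 hus,
    monotoneOn_comp_dual h1 hus,
    fun l hl => (hus l hl).1,
    fun l hl => by rw [dual_apply_dual h1 hus hl]⟩

theorem quasiLeontief_dual_recap
    {X Λ : Type*} [PartialOrder X] [LinearOrder Λ]
    (u : X → Λ) (u0 : X → X) (us : Λ → X) (Λ0 : Set Λ)
    (h1 : Set.range u ⊆ Λ0)
    (h2 : Λ0 ⊆ {l : Λ | ∃ x : X, l ≤ u x})
    (hu0 : ∀ x : X, IsLeast {x' : X | u x ≤ u x'} (u0 x))
    (hus : ∀ l ∈ Λ0, IsLeast {x : X | l ≤ u x} (us l)) :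
    (∀ x : X, u0 x = us (u x)) ∧
    {x : X | ∀ x' : X, u x ≤ u x' → x ≤ x'} = us '' Λ0 ∧
    MonotoneOn (fun l => u (us l)) Λ0 ∧
    (∀ l ∈ Λ0, l ≤ u (us l)) ∧
    (∀ l ∈ Λ0, u (us (u (us l))) = u (us l)) :=
  quasiLeontief_dual_recap_general u u0 us Λ0 h1 hu0 hus
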